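/- Every fixed point structure of the invariant distributions: a probability measure ξ on [0,1] is an invariant (stationary) distribution for the Wright–Fisher McKean–Vlasov equation df_t = s̄(Law(f_t)) f_t(1-f_t)dt + Θ̄(f_t)dt + √(f_t(1-f_t))dB_t (with θ⁺, θ⁻ > 0) if and only if ξ = Π_{y*} for some y* ∈ ℝ satisfying χ(y*) = y*, where Π_y has density C_y x^{2θ⁺-1}(1-x)^{2θ⁻-1}e^{2xy} on [0,1] and χ(y) := s̄(Π_y). Moreover, χ admits at least one fixed point. -/

import Mathlib

open MeasureTheory Set

/-- Unnormalized density of `Π_y`: `x^{2θ⁺-1}(1-x)^{2θ⁻-1}e^{2xy}`. -/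
noncomputable def dens (θp θm y x : ℝ) : ℝ :=
  x ^ (2 * θp - 1) * (1 - x) ^ (2 * θm - 1) * Real.exp (2 * x * y)

/-- The normalized measure `Π_y` on `[0,1]`, with density
`C_y x^{2θ⁺-1}(1-x)^{2θ⁻-1}e^{2xy}`. -/
noncomputable def PiMeas (θp θm y : ℝ) : Measure ℝ :=
  (volume.restrict (Icc (0 : ℝ) 1)).withDensity fun x =>
    ENNReal.ofReal (dens θp θm y x / ∫ z in Icc (0 : ℝ) 1, dens θp θm y z)

/-- The selection functional `s̄(ξ) = 2U'(⟨ξ, 2Id-1⟩)` for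
`U(z) = ca·z² + cb·z + cc`. -/
noncomputable def sbar (ca cb : ℝ) (ξ : Measure ℝ) : ℝ :=
  2 * (2 * ca * (∫ x, (2 * x - 1) ∂ξ) + cb)

/-- Mutation drift `Θ̄(x) = θ⁺(1-x) - θ⁻x`. -/
noncomputable def thetaBar (θp θm x : ℝ) : ℝ := θp * (1 - x) - θm * x

/-- Generator of the Wright–Fisher McKean–Vlasov dynamics, frozen at the
measure `ξ`:
`Ḡ_ξφ(x) = (s̄(ξ)x(1-x) + Θ̄(x))φ'(x) + ½x(1-x)φ''(x)`. -/
noncomputable def gen (θp θm ca cb : ℝ) (ξ : Measure ℝ) (φ : ℝ → ℝ) (x : ℝ) : ℝ :=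
  (sbar ca cb ξ * (x * (1 - x)) + thetaBar θp θm x) * deriv φ x
    + (1 / 2) * (x * (1 - x)) * deriv (deriv φ) x

/-- A probability measure `ξ` on `[0,1]` is invariant for the Wright–Fisher
McKean–Vlasov equation iff `∫ Ḡ_ξ φ dξ = 0` for all `φ ∈ C²`. -/
def IsInvariantWF (θp θm ca cb : ℝ) (ξ : Measure ℝ) : Prop :=
  IsProbabilityMeasure ξ ∧ ξ (Icc (0 : ℝ) 1)ᶜ = 0 ∧
  ∀ φ : ℝ → ℝ, ContDiff ℝ 2 φ → ∫ x, gen θp θm ca cb ξ φ x ∂ξ = 0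

/-!
Freeze the selection coefficient at `s = s̄(ξ)`: stationarity of `ξ` then says
`∫ L_s φ dξ = 0` for the generator `L_s` (`genConst`) of the Wright–Fisher diffusion with
constant selection. Since `(½ x(1-x) p)' = (s x(1-x) + Θ̄) p` for the density `p` of `Π_s`,
integration by parts shows that `Π_s` has this property. Conversely, if `g` is continuous, supported inside `(0,1)` and
orthogonal to `Π_s`, then `L_s φ = g` has a `C²` solution with `φ' = 2W / (x(1-x)p)`, `W` a
primitive of `g p`; hence `ξ` is proportional to `Π_s` on `(0,1)`, and testing against `x` and
`x²` rules out atoms at `0` and `1`. So `ξ = Π_{s̄(ξ)}`, i.e. `s̄(ξ)` is a fixed point of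
`χ(y) = s̄(Π_y)`; and `χ` is continuous and bounded, so it has a fixed point.
-/

open Filter Topology
open scoped ENNReal NNReal BoundedContinuousFunction

lemma Real.rpow_eq_mul_rpow_sub_one {x : ℝ} (hx : x ≠ 0) (a : ℝ) : x ^ a = x * x ^ (a - 1) := by
  rw [mul_comm, ← Real.rpow_add_one hx, sub_add_cancel]

theorem ContDiffOn.contDiff_of_tsupport_subset {𝕜 E F : Type*} [NontriviallyNormedField 𝕜]
    [NormedAddCommGroup E] [NormedSpace 𝕜 E] [NormedAddCommGroup F] [NormedSpace 𝕜 F]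
    {f : E → F} {s : Set E} {n : WithTop ℕ∞} (hf : ContDiffOn 𝕜 n f s) (hs : IsOpen s)
    (hsupp : tsupport f ⊆ s) : ContDiff 𝕜 n f := by
  refine contDiff_iff_contDiffAt.mpr fun x => ?_
  by_cases hx : x ∈ tsupport f
  · exact hf.contDiffAt (hs.mem_nhds (hsupp hx))
  · exact contDiffAt_const.congr_of_eventuallyEq (notMem_tsupport_iff_eventuallyEq.mp hx)

lemma exists_contDiff_two_deriv_eq {ψ : ℝ → ℝ} (hψ : ContDiff ℝ 1 ψ) :
    ∃ φ : ℝ → ℝ, ContDiff ℝ 2 φ ∧ deriv φ = ψ := by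
  have hφ : ∀ u, HasDerivAt (fun u => ∫ t in (0 : ℝ)..u, ψ t) (ψ u) u := fun u =>
    (hψ.continuous.integral_hasStrictDerivAt 0 u).hasDerivAt
  have hderiv : deriv (fun u => ∫ t in (0 : ℝ)..u, ψ t) = ψ := funext fun u => (hφ u).deriv
  refine ⟨_, (contDiff_succ_iff_deriv (n := 1)).mpr
    ⟨fun u => (hφ u).differentiableAt, by simp, ?_⟩, hderiv⟩
  rwa [hderiv]

lemma intervalIntegral.integral_eq_zero_of_support_subset_Ioo {h : ℝ → ℝ} {a b u : ℝ}
    (hh : Function.support h ⊆ Ioo a b) (h0 : ∫ x, h x = 0) (hu : u ∉ Ioo a b) :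
    ∫ t in a..u, h t = 0 := by
  have hzero : ∀ x ∉ Ioo a b, h x = 0 := Function.support_subset_iff'.mp hh
  rcases le_or_gt u a with hua | hau
  · rw [intervalIntegral.integral_symm, neg_eq_zero]
    refine (intervalIntegral.integral_congr fun x hx => hzero x ?_).trans (by simp)
    rw [uIcc_of_le hua] at hx
    exact fun hx' => hx'.1.not_ge hx.2
  · have hbu : b ≤ u := not_lt.mp fun hub => hu ⟨hau, hub⟩
    rw [intervalIntegral.integral_of_le hau.le, ← h0]
    refine setIntegral_eq_integral_of_forall_compl_eq_zero fun x hx => hzero x fun hx' => hx ?_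
    exact ⟨hx'.1, hx'.2.le.trans hbu⟩

lemma MeasureTheory.Integrable.of_continuous_of_measure_compl_eq_zero {μ : Measure ℝ}
    [IsFiniteMeasureOnCompacts μ] {K : Set ℝ} (hK : IsCompact K) (hμ : μ Kᶜ = 0) {f : ℝ → ℝ}
    (hf : Continuous f) : Integrable f μ := by
  rw [← Measure.restrict_eq_self_of_ae_mem (show ∀ᵐ x ∂μ, x ∈ K from hμ)]
  exact hf.continuousOn.integrableOn_compact hK

lemma MeasureTheory.Measure.eq_add_restrict_Ioo {μ : Measure ℝ} {a b : ℝ} (hab : a < b)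
    (hμ : μ (Icc a b)ᶜ = 0) : μ = μ {a} • dirac a + μ {b} • dirac b + μ.restrict (Ioo a b) := by
  calc μ = μ.restrict (Icc a b) :=
        (Measure.restrict_eq_self_of_ae_mem (show ∀ᵐ x ∂μ, x ∈ Icc a b from hμ)).symm
    _ = μ.restrict {a} + (μ.restrict {b} + μ.restrict (Ioo a b)) := by
        rw [← Ioc_insert_left hab.le, ← Ioo_insert_right hab, insert_eq, insert_eq,
          Measure.restrict_union (by simp [hab.ne])
            ((measurableSet_singleton _).union measurableSet_Ioo),
          Measure.restrict_union (by simp) measurableSet_Ioo]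
    _ = _ := by rw [Measure.restrict_singleton, Measure.restrict_singleton, add_assoc]

namespace WrightFisher

section Density

variable {θp θm y x : ℝ}

lemma dens_nonneg (hx : x ∈ Icc (0 : ℝ) 1) : 0 ≤ dens θp θm y x := by
  have h1 : 0 ≤ 1 - x := sub_nonneg.mpr hx.2
  unfold dens
  have := Real.rpow_nonneg hx.1 (2 * θp - 1)
  have := Real.rpow_nonneg h1 (2 * θm - 1)
  positivity

lemma dens_pos (hx : x ∈ Ioo (0 : ℝ) 1) : 0 < dens θp θm y x := by
  have h1 : 0 < 1 - x := sub_pos.mpr hx.2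
  unfold dens
  have := Real.rpow_pos_of_pos hx.1 (2 * θp - 1)
  have := Real.rpow_pos_of_pos h1 (2 * θm - 1)
  positivity

lemma measurable_dens : Measurable (dens θp θm y) := by
  unfold dens
  fun_prop

lemma continuousOn_dens : ContinuousOn (dens θp θm y) (Ioo 0 1) := by
  intro x hx
  have h1 : 1 - x ≠ 0 := (sub_pos.mpr hx.2).ne'
  unfold dens
  exact ((continuousAt_id.rpow_const (.inl hx.1.ne')).mul
    ((continuousAt_const.sub continuousAt_id).rpow_const (.inl h1))
    |>.mul (by fun_prop)).continuousWithinAt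

lemma integrableOn_dens (hθp : 0 < θp) (hθm : 0 < θm) :
    IntegrableOn (dens θp θm y) (Icc 0 1) := by
  have hsplit : Icc (0 : ℝ) 1 = Icc 0 (1 / 2) ∪ Icc (1 / 2) 1 :=
    (Icc_union_Icc_eq_Icc (by norm_num) (by norm_num)).symm
  have hleft : IntegrableOn (fun x : ℝ => x ^ (2 * θp - 1)) (Icc 0 (1 / 2)) :=
    (intervalIntegrable_iff_integrableOn_Icc_of_le (by norm_num)).mp
      (intervalIntegral.intervalIntegrable_rpow' (by linarith))
  have hright : IntegrableOn (fun x : ℝ => (1 - x) ^ (2 * θm - 1)) (Icc (1 / 2) 1) := by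
    have h := (intervalIntegral.intervalIntegrable_rpow' (r := 2 * θm - 1) (by linarith)
      (a := 0) (b := 1 / 2)).comp_sub_left 1
    rw [sub_zero, show (1 : ℝ) - 1 / 2 = 1 / 2 by norm_num] at h
    exact (intervalIntegrable_iff_integrableOn_Icc_of_le (by norm_num)).mp h.symm
  rw [hsplit]
  refine IntegrableOn.union ?_ ?_
  · refine (hleft.continuousOn_mul (g := fun x => (1 - x) ^ (2 * θm - 1) * Real.exp (2 * x * y))
      ?_ isCompact_Icc).congr_fun (fun x _ => by unfold dens; ring) measurableSet_Icc
    intro x hx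
    have h1 : 1 - x ≠ 0 := by linarith [hx.2]
    exact (((continuousAt_const.sub continuousAt_id).rpow_const (.inl h1)).mul
      (by fun_prop)).continuousWithinAt
  · refine (hright.continuousOn_mul (g := fun x => x ^ (2 * θp - 1) * Real.exp (2 * x * y))
      ?_ isCompact_Icc).congr_fun (fun x _ => by unfold dens; ring) measurableSet_Icc
    intro x hx
    have h1 : x ≠ 0 := by linarith [hx.1]
    exact ((continuousAt_id.rpow_const (.inl h1)).mul (by fun_prop)).continuousWithinAt

lemma integrableOn_mul_dens (hθp : 0 < θp) (hθm : 0 < θm) {f : ℝ → ℝ}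
    (hf : ContinuousOn f (Icc 0 1)) :
    IntegrableOn (fun x => f x * dens θp θm y x) (Icc 0 1) :=
  (integrableOn_dens hθp hθm).continuousOn_mul hf isCompact_Icc

lemma integral_dens_pos (hθp : 0 < θp) (hθm : 0 < θm) :
    0 < ∫ x in Icc (0 : ℝ) 1, dens θp θm y x := by
  rw [setIntegral_pos_iff_support_of_nonneg_ae
    (ae_restrict_of_forall_mem measurableSet_Icc fun _ hx => dens_nonneg hx)
    (integrableOn_dens hθp hθm)]
  calc (0 : ℝ≥0∞) < volume (Ioo (0 : ℝ) 1) := by simp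
    _ ≤ _ := measure_mono fun x (hx : x ∈ Ioo 0 1) =>
      (⟨(dens_pos hx).ne', Ioo_subset_Icc_self hx⟩ : x ∈ Function.support _ ∩ Icc 0 1)

lemma integral_PiMeas (f : ℝ → ℝ) :
    ∫ x, f x ∂PiMeas θp θm y
      = (∫ x in Icc (0 : ℝ) 1, f x * dens θp θm y x) / ∫ x in Icc (0 : ℝ) 1, dens θp θm y x := by
  set Z := ∫ x in Icc (0 : ℝ) 1, dens θp θm y x
  have hZ : 0 ≤ Z := setIntegral_nonneg measurableSet_Icc fun _ hx => dens_nonneg hx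
  rw [PiMeas, integral_withDensity_eq_integral_toReal_smul₀, ← integral_div]
  · refine setIntegral_congr_fun measurableSet_Icc fun x hx => ?_
    rw [ENNReal.toReal_ofReal (div_nonneg (dens_nonneg hx) hZ), smul_eq_mul]
    ring
  · exact (measurable_dens.div_const _).ennreal_ofReal.aemeasurable
  · exact ae_of_all _ fun _ => ENNReal.ofReal_lt_top

lemma PiMeas_compl_Ioo : PiMeas θp θm y (Ioo 0 1)ᶜ = 0 := by
  rw [PiMeas, withDensity_apply _ measurableSet_Ioo.compl,
    Measure.restrict_congr_set Ioo_ae_eq_Icc.symm,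
    Measure.restrict_restrict measurableSet_Ioo.compl]
  simp

lemma restrict_Ioo_PiMeas : (PiMeas θp θm y).restrict (Ioo 0 1) = PiMeas θp θm y :=
  Measure.restrict_eq_self_of_ae_mem PiMeas_compl_Ioo

lemma PiMeas_compl_Icc : PiMeas θp θm y (Icc 0 1)ᶜ = 0 :=
  measure_mono_null (compl_subset_compl.mpr Ioo_subset_Icc_self) PiMeas_compl_Ioo

lemma isProbabilityMeasure_PiMeas (hθp : 0 < θp) (hθm : 0 < θm) :
    IsProbabilityMeasure (PiMeas θp θm y) := by
  have hZ := integral_dens_pos (y := y) hθp hθm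
  constructor
  rw [PiMeas, withDensity_apply _ MeasurableSet.univ, Measure.restrict_univ,
    ← ofReal_integral_eq_lintegral_ofReal ((integrableOn_dens hθp hθm).div_const _)
      (ae_restrict_of_forall_mem measurableSet_Icc fun x hx => div_nonneg (dens_nonneg hx) hZ.le),
    integral_div, div_self hZ.ne', ENNReal.ofReal_one]

end Density

section Generator

variable {θp θm y x s : ℝ}

noncomputable def genConst (θp θm s : ℝ) (φ : ℝ → ℝ) (x : ℝ) : ℝ :=
  (s * (x * (1 - x)) + thetaBar θp θm x) * deriv φ x
    + (1 / 2) * (x * (1 - x)) * deriv (deriv φ) x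

lemma gen_eq_genConst (ca cb : ℝ) (ξ : Measure ℝ) :
    gen θp θm ca cb ξ = genConst θp θm (sbar ca cb ξ) := rfl

lemma continuous_genConst {φ : ℝ → ℝ} (hφ : ContDiff ℝ 2 φ) :
    Continuous (genConst θp θm s φ) := by
  have h1 : Continuous (deriv φ) := hφ.continuous_deriv (by norm_num)
  have h2 : Continuous (deriv (deriv φ)) := by fun_prop
  unfold genConst thetaBar
  fun_prop

/-- `x(1-x) · dens`, written so as to be continuous on `[0,1]` and to vanish at both ends. -/
noncomputable def fluxDens (θp θm y x : ℝ) : ℝ :=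
  x ^ (2 * θp) * (1 - x) ^ (2 * θm) * Real.exp (2 * x * y)

lemma continuous_fluxDens (hθp : 0 < θp) (hθm : 0 < θm) : Continuous (fluxDens θp θm y) := by
  unfold fluxDens
  exact ((continuous_id.rpow_const fun _ => .inr (by linarith)).mul
    ((continuous_const.sub continuous_id).rpow_const fun _ => .inr (by linarith))).mul
    (by fun_prop)

lemma fluxDens_zero (hθp : 0 < θp) : fluxDens θp θm y 0 = 0 := by
  simp [fluxDens, Real.zero_rpow (by linarith : 2 * θp ≠ 0)]

lemma fluxDens_one (hθm : 0 < θm) : fluxDens θp θm y 1 = 0 := by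
  simp [fluxDens, Real.zero_rpow (by linarith : 2 * θm ≠ 0)]

lemma fluxDens_eq (hx : x ∈ Ioo (0 : ℝ) 1) :
    fluxDens θp θm y x = x * (1 - x) * dens θp θm y x := by
  have h1 : 1 - x ≠ 0 := (sub_pos.mpr hx.2).ne'
  rw [fluxDens, dens, Real.rpow_eq_mul_rpow_sub_one hx.1.ne', Real.rpow_eq_mul_rpow_sub_one h1]
  ring

lemma hasDerivAt_fluxDens (hx : x ∈ Ioo (0 : ℝ) 1) :
    HasDerivAt (fluxDens θp θm y)
      (2 * (y * (x * (1 - x)) + thetaBar θp θm x) * dens θp θm y x) x := by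
  have h1 : 1 - x ≠ 0 := (sub_pos.mpr hx.2).ne'
  have d1 := Real.hasDerivAt_rpow_const (p := 2 * θp) (.inl hx.1.ne')
  have d2 := (Real.hasDerivAt_rpow_const (p := 2 * θm) (.inl h1)).comp x
    ((hasDerivAt_id x).const_sub 1)
  have d3 := ((hasDerivAt_id x).const_mul 2 |>.mul_const y).exp
  refine ((d1.mul d2).mul d3).congr_deriv ?_
  simp only [Function.comp_apply, Pi.mul_apply, id]
  rw [dens, thetaBar, Real.rpow_eq_mul_rpow_sub_one hx.1.ne' (2 * θp),
    Real.rpow_eq_mul_rpow_sub_one h1 (2 * θm)]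
  ring

lemma fluxDens_pos (hx : x ∈ Ioo (0 : ℝ) 1) : 0 < fluxDens θp θm y x := by
  rw [fluxDens_eq hx]
  exact mul_pos (mul_pos hx.1 (sub_pos.mpr hx.2)) (dens_pos hx)

lemma contDiffAt_fluxDens (hx : x ∈ Ioo (0 : ℝ) 1) : ContDiffAt ℝ 1 (fluxDens θp θm y) x := by
  have h1 : 1 - x ≠ 0 := (sub_pos.mpr hx.2).ne'
  unfold fluxDens
  exact ((Real.contDiffAt_rpow_const_of_ne hx.1.ne').mul
    ((contDiffAt_const.sub contDiffAt_id).rpow_const_of_ne h1)).mul (by fun_prop)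

lemma integral_genConst_mul_dens (hθp : 0 < θp) (hθm : 0 < θm) {φ : ℝ → ℝ}
    (hφ : ContDiff ℝ 2 φ) :
    ∫ x in Icc (0 : ℝ) 1, genConst θp θm y φ x * dens θp θm y x = 0 := by
  set F : ℝ → ℝ := fun x => fluxDens θp θm y x * deriv φ x / 2
  have hφ' : Differentiable ℝ (deriv φ) := hφ.differentiable_deriv_two
  have hF : ∀ x ∈ Ioo (0 : ℝ) 1, HasDerivAt F (genConst θp θm y φ x * dens θp θm y x) x := by
    intro x hx
    refine (((hasDerivAt_fluxDens hx).mul (hφ' x).hasDerivAt).div_const 2).congr_deriv ?_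
    rw [genConst, fluxDens_eq hx]
    ring
  have hFc : Continuous F :=
    ((continuous_fluxDens hθp hθm).mul (hφ.continuous_deriv (by norm_num))).div_const 2
  rw [integral_Icc_eq_integral_Ioc, ← intervalIntegral.integral_of_le zero_le_one,
    intervalIntegral.integral_eq_sub_of_hasDerivAt_of_le zero_le_one hFc.continuousOn hF
      ((intervalIntegrable_iff_integrableOn_Icc_of_le zero_le_one).mpr
        (integrableOn_mul_dens hθp hθm (continuous_genConst hφ).continuousOn))]
  simp [F, fluxDens_zero hθp, fluxDens_one hθm]

lemma integral_genConst_PiMeas (hθp : 0 < θp) (hθm : 0 < θm) {φ : ℝ → ℝ}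
    (hφ : ContDiff ℝ 2 φ) : ∫ x, genConst θp θm y φ x ∂PiMeas θp θm y = 0 := by
  rw [integral_PiMeas, integral_genConst_mul_dens hθp hθm hφ, zero_div]

end Generator

section FixedPoint

variable {θp θm : ℝ}

lemma abs_sbar_le (ca cb : ℝ) {ξ : Measure ℝ} [IsProbabilityMeasure ξ]
    (hξ : ξ (Icc 0 1)ᶜ = 0) : |sbar ca cb ξ| ≤ 2 * (2 * |ca| + |cb|) := by
  have hmem : ∀ᵐ x ∂ξ, x ∈ Icc (0 : ℝ) 1 := hξ
  have hmean : |∫ x, (2 * x - 1) ∂ξ| ≤ 1 := by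
    simpa using norm_integral_le_of_norm_le_const (C := 1) (f := fun x : ℝ => 2 * x - 1)
      (hmem.mono fun x hx => by
        rw [Real.norm_eq_abs, abs_le]; constructor <;> linarith [hx.1, hx.2])
  rw [sbar, abs_mul, abs_two]
  gcongr
  calc |2 * ca * ∫ x, (2 * x - 1) ∂ξ + cb| ≤ |2 * ca| * |∫ x, (2 * x - 1) ∂ξ| + |cb| := by
        rw [← abs_mul]; exact abs_add_le _ _
    _ ≤ 2 * |ca| * 1 + |cb| := by rw [abs_mul, abs_two]; gcongr
    _ = 2 * |ca| + |cb| := by ring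

lemma dens_le_exp_mul_dens_zero {y x : ℝ} (hx : x ∈ Icc (0 : ℝ) 1) :
    dens θp θm y x ≤ Real.exp (2 * |y|) * dens θp θm 0 x := by
  have hexp : Real.exp (2 * x * y) ≤ Real.exp (2 * |y|) := by
    refine Real.exp_le_exp.mpr ?_
    calc 2 * x * y ≤ 2 * x * |y| := mul_le_mul_of_nonneg_left (le_abs_self y) (by linarith [hx.1])
      _ ≤ 2 * 1 * |y| := by gcongr; exact hx.2
      _ = 2 * |y| := by ring
  have h0 := dens_nonneg (θp := θp) (θm := θm) (y := 0) hx
  simp only [dens, mul_zero, Real.exp_zero, mul_one] at h0 ⊢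
  nlinarith

lemma continuous_integral_mul_dens (hθp : 0 < θp) (hθm : 0 < θm) {f : ℝ → ℝ}
    (hf : ContinuousOn f (Icc 0 1)) :
    Continuous fun y => ∫ x in Icc (0 : ℝ) 1, f x * dens θp θm y x := by
  refine continuous_iff_continuousAt.mpr fun y₀ => ?_
  set R := |y₀| + 1
  have hR : ∀ y ∈ Icc (y₀ - 1) (y₀ + 1), |y| ≤ R := fun y hy => by
    rw [abs_le]; constructor <;> cases abs_cases y₀ <;> linarith [hy.1, hy.2]
  refine (continuousOn_of_dominated (s := Icc (y₀ - 1) (y₀ + 1))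
    (bound := fun x => Real.exp (2 * R) * ‖f x‖ * dens θp θm 0 x) ?_ ?_ ?_ ?_).continuousAt
    (Icc_mem_nhds (by linarith) (by linarith))
  · exact fun y _ => (hf.aestronglyMeasurable measurableSet_Icc).mul
      measurable_dens.aestronglyMeasurable
  · refine fun y hy => ae_restrict_of_forall_mem measurableSet_Icc fun x hx => ?_
    rw [norm_mul, Real.norm_of_nonneg (dens_nonneg hx), mul_comm (Real.exp _), mul_assoc]
    exact mul_le_mul_of_nonneg_left ((dens_le_exp_mul_dens_zero hx).trans
      (by gcongr; exacts [dens_nonneg hx, hR y hy])) (norm_nonneg _)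
  · exact integrableOn_mul_dens hθp hθm (continuousOn_const.mul hf.norm)
  · exact ae_of_all _ fun x => by unfold dens; fun_prop

lemma continuous_integral_PiMeas (hθp : 0 < θp) (hθm : 0 < θm) {f : ℝ → ℝ}
    (hf : ContinuousOn f (Icc 0 1)) : Continuous fun y => ∫ x, f x ∂PiMeas θp θm y := by
  simp only [integral_PiMeas]
  refine (continuous_integral_mul_dens hθp hθm hf).div ?_ fun y => (integral_dens_pos hθp hθm).ne'
  simpa using continuous_integral_mul_dens hθp hθm (f := fun _ => 1) continuousOn_const

lemma exists_sbar_PiMeas_eq (hθp : 0 < θp) (hθm : 0 < θm) (ca cb : ℝ) :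
    ∃ y, sbar ca cb (PiMeas θp θm y) = y := by
  have hcont : Continuous fun y => sbar ca cb (PiMeas θp θm y) := by
    unfold sbar
    have := continuous_integral_PiMeas hθp hθm (f := fun x => 2 * x - 1) (by fun_prop)
    fun_prop
  have hbound : ∀ y, |sbar ca cb (PiMeas θp θm y)| ≤ 2 * (2 * |ca| + |cb|) := fun y =>
    have := isProbabilityMeasure_PiMeas (y := y) hθp hθm
    abs_sbar_le ca cb PiMeas_compl_Icc
  obtain ⟨y, -, hy⟩ := exists_mem_Icc_isFixedPt hcont.continuousOn
    (neg_le_self (by positivity)) (neg_le_of_abs_le (hbound _)) (le_of_abs_le (hbound _))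
  exact ⟨y, hy⟩

end FixedPoint

noncomputable def cutoff (ε x : ℝ) : ℝ := max 0 (min 1 (min x (1 - x) / ε - 1))

section Cutoff

variable {ε x : ℝ}

lemma continuous_cutoff : Continuous (cutoff ε) := by
  unfold cutoff
  fun_prop

lemma abs_cutoff_le_one : |cutoff ε x| ≤ 1 := by
  rw [abs_of_nonneg (le_max_left _ _)]
  exact max_le zero_le_one (min_le_left _ _)

lemma support_cutoff_subset (hε : 0 < ε) : Function.support (cutoff ε) ⊆ Ioo ε (1 - ε) := by
  refine Function.support_subset_iff'.mpr fun x hx => max_eq_left (min_le_of_right_le ?_)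
  rw [sub_nonpos, div_le_one hε]
  by_contra! h
  exact hx ⟨(min_le_left _ _).trans_lt' h, by linarith [(min_le_right x (1 - x)).trans_lt' h]⟩

lemma cutoff_eq_one (hε : 0 < ε) (hx : 2 * ε ≤ min x (1 - x)) : cutoff ε x = 1 := by
  have : 1 ≤ min x (1 - x) / ε - 1 := by rw [le_sub_iff_add_le, le_div_iff₀ hε]; linarith
  rw [cutoff, min_eq_left this, max_eq_right zero_le_one]

lemma tendsto_cutoff (x : ℝ) :
    Tendsto (fun n : ℕ => cutoff (1 / (n + 1)) x) atTop (𝓝 ((Ioo 0 1).indicator 1 x)) := by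
  have hpos : ∀ n : ℕ, (0 : ℝ) < 1 / (n + 1) := fun n => by positivity
  by_cases hx : x ∈ Ioo (0 : ℝ) 1
  · rw [indicator_of_mem hx]
    have hlim : Tendsto (fun n : ℕ => 2 * (1 / ((n : ℝ) + 1))) atTop (𝓝 0) := by
      simpa using tendsto_one_div_add_atTop_nhds_zero_nat.const_mul (2 : ℝ)
    refine tendsto_const_nhds.congr' ?_
    filter_upwards [hlim.eventually_le_const (lt_min hx.1 (sub_pos.mpr hx.2))] with n hn
    exact (cutoff_eq_one (hpos n) hn).symm
  · rw [indicator_of_notMem hx]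
    refine tendsto_const_nhds.congr fun n => ?_
    refine (Function.notMem_support.mp fun h => hx ?_).symm
    exact Ioo_subset_Ioo (hpos n).le (by linarith [hpos n]) (support_cutoff_subset (hpos n) h)

lemma tendsto_integral_mul_cutoff {μ : Measure ℝ} [IsFiniteMeasure μ] (f : ℝ →ᵇ ℝ) :
    Tendsto (fun n : ℕ => ∫ x, f x * cutoff (1 / (n + 1)) x ∂μ) atTop
      (𝓝 (∫ x in Ioo 0 1, f x ∂μ)) := by
  rw [← integral_indicator measurableSet_Ioo]
  refine tendsto_integral_of_dominated_convergence (fun _ => ‖f‖)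
    (fun n => (f.continuous.mul continuous_cutoff).aestronglyMeasurable) (integrable_const _)
    (fun n => ae_of_all _ fun x => ?_) (ae_of_all _ fun x => ?_)
  · rw [norm_mul, Real.norm_eq_abs (cutoff _ x)]
    exact mul_le_of_le_one_right (norm_nonneg _) abs_cutoff_le_one |>.trans (f.norm_coe_le_norm x)
  · simpa [indicator_apply] using (tendsto_cutoff x).const_mul (f x)

end Cutoff

section Stationary

variable {θp θm s ε : ℝ} {ξ : Measure ℝ}

lemma tsupport_subset_Ioo_zero_one {f : ℝ → ℝ} (hε : 0 < ε)
    (hsupp : Function.support f ⊆ Ioo ε (1 - ε)) : tsupport f ⊆ Ioo 0 1 :=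
  (closure_minimal (hsupp.trans Ioo_subset_Icc_self) isClosed_Icc).trans
    (Icc_subset_Ioo hε (by linarith))

lemma continuous_mul_dens {g : ℝ → ℝ} (hg : Continuous g) (hε : 0 < ε)
    (hsupp : Function.support g ⊆ Ioo ε (1 - ε)) :
    Continuous fun x => g x * dens θp θm s x :=
  (hg.continuousOn.mul continuousOn_dens).continuous_of_tsupport_subset isOpen_Ioo
    (tsupport_subset_Ioo_zero_one hε ((Function.support_mul_subset_left _ _).trans hsupp))

/-- The first-order equation for `ψ = φ'` behind `genConst θp θm s φ = g`, solved by
`ψ = 2 W / fluxDens` with `W` a primitive of `g · dens`; orthogonality of `g` to the density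
makes `W`, hence `ψ`, vanish near `0` and `1`. -/
lemma exists_contDiff_one_mul_add_deriv_eq {g : ℝ → ℝ} (hg : Continuous g) (hε : 0 < ε)
    (hsupp : Function.support g ⊆ Ioo ε (1 - ε)) (h0 : ∫ x, g x * dens θp θm s x = 0) :
    ∃ ψ : ℝ → ℝ, ContDiff ℝ 1 ψ ∧ Function.support ψ ⊆ Ioo ε (1 - ε) ∧
      ∀ x ∈ Ioo (0 : ℝ) 1,
        (s * (x * (1 - x)) + thetaBar θp θm x) * ψ x + 1 / 2 * (x * (1 - x)) * deriv ψ x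
          = g x := by
  set h := fun x => g x * dens θp θm s x
  have hh : Continuous h := continuous_mul_dens hg hε hsupp
  set W := fun u => ∫ t in ε..u, h t
  have hW : ∀ u, HasDerivAt W (h u) u := fun u => (hh.integral_hasStrictDerivAt ε u).hasDerivAt
  have hW1 : ContDiff ℝ 1 W := contDiff_one_iff_deriv.mpr
    ⟨fun u => (hW u).differentiableAt, by rwa [funext fun u => (hW u).deriv]⟩
  have hW0 : ∀ u ∉ Ioo ε (1 - ε), W u = 0 := fun u hu =>
    intervalIntegral.integral_eq_zero_of_support_subset_Ioo
      ((Function.support_mul_subset_left _ _).trans hsupp) h0 hu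
  have hψsupp : Function.support (fun u => 2 * W u / fluxDens θp θm s u) ⊆ Ioo ε (1 - ε) :=
    Function.support_subset_iff'.mpr fun u hu => by simp [hW0 u hu]
  refine ⟨fun u => 2 * W u / fluxDens θp θm s u, ?_, hψsupp, fun x hx => ?_⟩
  · refine ContDiffOn.contDiff_of_tsupport_subset (fun x hx => ?_) isOpen_Ioo
      (tsupport_subset_Ioo_zero_one hε hψsupp)
    exact ((contDiffAt_const.mul hW1.contDiffAt).div (contDiffAt_fluxDens hx)
      (fluxDens_pos hx).ne').contDiffWithinAt
  · have hx0 : x ≠ 0 := hx.1.ne'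
    have hx1 : 1 - x ≠ 0 := (sub_pos.mpr hx.2).ne'
    have hd : dens θp θm s x ≠ 0 := (dens_pos hx).ne'
    have hψ' : HasDerivAt (fun u => 2 * W u / fluxDens θp θm s u) _ x :=
      ((hW x).const_mul 2).div (hasDerivAt_fluxDens hx) (fluxDens_pos hx).ne'
    rw [hψ'.deriv]
    simp only [h, fluxDens_eq hx]
    field_simp
    ring

lemma exists_contDiff_genConst_eq {g : ℝ → ℝ} (hg : Continuous g) (hε : 0 < ε)
    (hsupp : Function.support g ⊆ Ioo ε (1 - ε)) (h0 : ∫ x, g x * dens θp θm s x = 0) :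
    ∃ φ : ℝ → ℝ, ContDiff ℝ 2 φ ∧ ∀ x ∈ Icc (0 : ℝ) 1, genConst θp θm s φ x = g x := by
  obtain ⟨ψ, hψ, hψsupp, hψeq⟩ := exists_contDiff_one_mul_add_deriv_eq hg hε hsupp h0
  obtain ⟨φ, hφ, hφψ⟩ := exists_contDiff_two_deriv_eq hψ
  refine ⟨φ, hφ, fun x hx => ?_⟩
  rw [genConst, hφψ]
  by_cases hx' : x ∈ Ioo 0 1
  · exact hψeq x hx'
  have hxε : x ∉ Ioo ε (1 - ε) := fun h => hx' (Ioo_subset_Ioo hε.le (by linarith) h)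
  have hx01 : x * (1 - x) = 0 := by
    rcases hx.1.eq_or_lt with rfl | h0x
    · ring
    rcases hx.2.eq_or_lt with rfl | hx1
    · ring
    exact absurd ⟨h0x, hx1⟩ hx'
  rw [hx01, Function.notMem_support.mp fun h => hxε (hψsupp h),
    Function.notMem_support.mp fun h => hxε (hsupp h)]
  ring

lemma integral_eq_zero_of_integral_PiMeas_eq_zero (hθp : 0 < θp) (hθm : 0 < θm)
    (hξ : ξ (Icc 0 1)ᶜ = 0)
    (hstat : ∀ φ : ℝ → ℝ, ContDiff ℝ 2 φ → ∫ x, genConst θp θm s φ x ∂ξ = 0)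
    {g : ℝ → ℝ} (hg : Continuous g) {ε : ℝ} (hε : 0 < ε)
    (hsupp : Function.support g ⊆ Ioo ε (1 - ε)) (h0 : ∫ x, g x ∂PiMeas θp θm s = 0) :
    ∫ x, g x ∂ξ = 0 := by
  have hzero : ∀ x ∉ Ioo ε (1 - ε), g x = 0 := Function.support_subset_iff'.mp hsupp
  rw [integral_PiMeas, div_eq_zero_iff, or_iff_left (integral_dens_pos hθp hθm).ne',
    setIntegral_eq_integral_of_forall_compl_eq_zero fun x hx => by
      rw [hzero x fun hx' => hx (Ioo_subset_Icc_self (Ioo_subset_Ioo hε.le (by linarith) hx')),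
        zero_mul]] at h0
  obtain ⟨φ, hφ, hφg⟩ := exists_contDiff_genConst_eq hg hε hsupp h0
  calc ∫ x, g x ∂ξ = ∫ x, genConst θp θm s φ x ∂ξ :=
        integral_congr_ae ((show ∀ᵐ x ∂ξ, x ∈ Icc (0 : ℝ) 1 from hξ).mono fun x hx =>
          (hφg x hx).symm)
    _ = 0 := hstat φ hφ

lemma exists_integral_cutoff_PiMeas_ne_zero (hθp : 0 < θp) (hθm : 0 < θm) :
    ∃ n : ℕ, ∫ x, cutoff (1 / (n + 1)) x ∂PiMeas θp θm s ≠ 0 := by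
  have := isProbabilityMeasure_PiMeas (y := s) hθp hθm
  have h := tendsto_integral_mul_cutoff (μ := PiMeas θp θm s) 1
  simp only [BoundedContinuousFunction.coe_one, Pi.one_apply, one_mul, restrict_Ioo_PiMeas,
    integral_const, probReal_univ, smul_eq_mul, mul_one] at h
  exact (h.eventually_ne one_ne_zero).exists

/-- On test functions supported inside `(0,1)`, `∫ · dξ` vanishes on the kernel of
`∫ · dΠ_s`, hence is a multiple of it. -/
lemma exists_integral_eq_mul_integral_PiMeas (hθp : 0 < θp) (hθm : 0 < θm) [IsFiniteMeasure ξ]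
    (hξ : ξ (Icc 0 1)ᶜ = 0)
    (hstat : ∀ φ : ℝ → ℝ, ContDiff ℝ 2 φ → ∫ x, genConst θp θm s φ x ∂ξ = 0) :
    ∃ c : ℝ, ∀ g : ℝ → ℝ, Continuous g → ∀ ε, 0 < ε → Function.support g ⊆ Ioo ε (1 - ε) →
      ∫ x, g x ∂ξ = c * ∫ x, g x ∂PiMeas θp θm s := by
  have := isProbabilityMeasure_PiMeas (y := s) hθp hθm
  obtain ⟨n, hn⟩ := exists_integral_cutoff_PiMeas_ne_zero (s := s) hθp hθm
  set ε₀ : ℝ := 1 / (n + 1)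
  have hε₀ : 0 < ε₀ := by positivity
  set g₀ := cutoff ε₀
  have hg₀ : Continuous g₀ := continuous_cutoff
  have hg₀supp : Function.support g₀ ⊆ Ioo ε₀ (1 - ε₀) := support_cutoff_subset hε₀
  set I₀ := ∫ x, g₀ x ∂PiMeas θp θm s
  have hint : ∀ {μ : Measure ℝ} [IsFiniteMeasure μ], μ (Icc 0 1)ᶜ = 0 →
      ∀ {f : ℝ → ℝ}, Continuous f → Integrable f μ := fun hμ _ hf =>
    .of_continuous_of_measure_compl_eq_zero isCompact_Icc hμ hf
  refine ⟨(∫ x, g₀ x ∂ξ) / I₀, fun g hg ε hε hsupp => ?_⟩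
  set k := (∫ x, g x ∂PiMeas θp θm s) / I₀
  have hsupp' : Function.support (fun x => g x - k * g₀ x) ⊆
      Ioo (min ε ε₀) (1 - min ε ε₀) := by
    refine Function.support_subset_iff'.mpr fun x hx => ?_
    have hsub : ∀ δ, min ε ε₀ ≤ δ → Ioo δ (1 - δ) ⊆ Ioo (min ε ε₀) (1 - min ε ε₀) :=
      fun δ hδ => Ioo_subset_Ioo hδ (by linarith)
    rw [Function.notMem_support.mp fun h => hx (hsub ε (min_le_left _ _) (hsupp h)),
      Function.notMem_support.mp fun h =>
        hx (hsub ε₀ (min_le_right _ _) (hg₀supp h)), mul_zero, sub_zero]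
  have h0 : ∫ x, g x - k * g₀ x ∂PiMeas θp θm s = 0 := by
    rw [integral_sub (hint PiMeas_compl_Icc hg) ((hint PiMeas_compl_Icc hg₀).const_mul k),
      integral_const_mul, div_mul_cancel₀ _ hn, sub_self]
  have h := integral_eq_zero_of_integral_PiMeas_eq_zero hθp hθm hξ hstat
    (g := fun x => g x - k * g₀ x) (hg.sub (continuous_const.mul hg₀)) (lt_min hε hε₀) hsupp' h0
  rw [integral_sub (hint hξ hg) ((hint hξ hg₀).const_mul k), integral_const_mul,
    sub_eq_zero] at h
  rw [h]
  ring

lemma exists_restrict_Ioo_eq_smul_PiMeas (hθp : 0 < θp) (hθm : 0 < θm) [IsFiniteMeasure ξ]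
    (hξ : ξ (Icc 0 1)ᶜ = 0)
    (hstat : ∀ φ : ℝ → ℝ, ContDiff ℝ 2 φ → ∫ x, genConst θp θm s φ x ∂ξ = 0) :
    ∃ c : ℝ≥0, ξ.restrict (Ioo 0 1) = c • PiMeas θp θm s := by
  have := isProbabilityMeasure_PiMeas (y := s) hθp hθm
  obtain ⟨c, hc⟩ := exists_integral_eq_mul_integral_PiMeas hθp hθm hξ hstat
  have hlim : ∀ f : ℝ →ᵇ ℝ, ∫ x in Ioo 0 1, f x ∂ξ = c * ∫ x, f x ∂PiMeas θp θm s := by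
    intro f
    have hpos : ∀ n : ℕ, (0 : ℝ) < 1 / (n + 1) := fun n => by positivity
    have h := (tendsto_integral_mul_cutoff (μ := PiMeas θp θm s) f).const_mul c
    rw [restrict_Ioo_PiMeas] at h
    refine tendsto_nhds_unique (tendsto_integral_mul_cutoff f) (h.congr fun n => ?_)
    exact (hc _ (f.continuous.mul continuous_cutoff) _ (hpos n)
      ((Function.support_mul_subset_right _ _).trans (support_cutoff_subset (hpos n)))).symm
  have hc0 : 0 ≤ c := by
    have h := hlim 1
    simp only [BoundedContinuousFunction.coe_one, Pi.one_apply, integral_const, smul_eq_mul,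
      mul_one, probReal_univ] at h
    exact h ▸ measureReal_nonneg
  refine ⟨c.toNNReal, ext_of_forall_integral_eq_of_IsFiniteMeasure fun f => ?_⟩
  rw [integral_smul_nnreal_measure, NNReal.smul_def, Real.coe_toNNReal c hc0, smul_eq_mul, hlim f]

lemma measure_singleton_eq_zero_of_stationary (hθp : 0 < θp) (hθm : 0 < θm)
    [IsFiniteMeasure ξ] (hξ : ξ (Icc 0 1)ᶜ = 0)
    (hstat : ∀ φ : ℝ → ℝ, ContDiff ℝ 2 φ → ∫ x, genConst θp θm s φ x ∂ξ = 0) :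
    ξ {0} = 0 ∧ ξ {1} = 0 := by
  obtain ⟨c, hc⟩ := exists_restrict_Ioo_eq_smul_PiMeas hθp hθm hξ hstat
  have hdec := Measure.eq_add_restrict_Ioo zero_lt_one hξ
  rw [hc] at hdec
  have hatoms : ∀ φ : ℝ → ℝ, ContDiff ℝ 2 φ →
      (ξ {0}).toReal * (θp * deriv φ 0) = (ξ {1}).toReal * (θm * deriv φ 1) := by
    intro φ hφ
    have hint := Integrable.of_continuous_of_measure_compl_eq_zero isCompact_Icc hξ
      (continuous_genConst (θp := θp) (θm := θm) (s := s) hφ)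
    have h := hstat φ hφ
    rw [hdec] at hint h
    rw [integral_add_measure hint.left_of_add_measure hint.right_of_add_measure,
      integral_add_measure hint.left_of_add_measure.left_of_add_measure
        hint.left_of_add_measure.right_of_add_measure,
      integral_smul_measure, integral_smul_measure, integral_smul_nnreal_measure,
      integral_dirac, integral_dirac, integral_genConst_PiMeas hθp hθm hφ] at h
    norm_num [genConst, thetaBar] at h
    linarith
  have hnull : ∀ a : ℝ, (ξ {a}).toReal = 0 → ξ {a} = 0 := fun a h =>
    ((ENNReal.toReal_eq_zero_iff _).mp h).resolve_right (measure_ne_top _ _)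
  have h1 : ξ {1} = 0 := hnull 1 <| by
    have h := hatoms (fun x => x ^ 2) (contDiff_id.pow 2)
    norm_num at h
    exact h.resolve_right hθm.ne'
  refine ⟨hnull 0 ?_, h1⟩
  have h := hatoms id contDiff_id
  rw [h1] at h
  norm_num at h
  exact h.resolve_right hθp.ne'

lemma eq_PiMeas_of_stationary (hθp : 0 < θp) (hθm : 0 < θm) [IsProbabilityMeasure ξ]
    (hξ : ξ (Icc 0 1)ᶜ = 0)
    (hstat : ∀ φ : ℝ → ℝ, ContDiff ℝ 2 φ → ∫ x, genConst θp θm s φ x ∂ξ = 0) :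
    ξ = PiMeas θp θm s := by
  have := isProbabilityMeasure_PiMeas (y := s) hθp hθm
  obtain ⟨c, hc⟩ := exists_restrict_Ioo_eq_smul_PiMeas hθp hθm hξ hstat
  obtain ⟨h0, h1⟩ := measure_singleton_eq_zero_of_stationary hθp hθm hξ hstat
  have hdec := Measure.eq_add_restrict_Ioo zero_lt_one hξ
  rw [h0, h1, hc, zero_smul, zero_smul, zero_add, zero_add] at hdec
  have hc1 : c = 1 := by
    have h := congrArg (· univ) hdec
    simp only [measure_univ, Measure.smul_apply, ENNReal.smul_def, smul_eq_mul, mul_one] at h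
    exact_mod_cast h.symm
  rwa [hc1, one_smul] at hdec

end Stationary

end WrightFisher

theorem invariant_distributions_general (θp θm : ℝ) (hθp : 0 < θp) (hθm : 0 < θm)
    (ca cb : ℝ) :
    (∃ y : ℝ, sbar ca cb (PiMeas θp θm y) = y) ∧
    (∀ ξ : Measure ℝ, IsProbabilityMeasure ξ → ξ (Icc (0 : ℝ) 1)ᶜ = 0 →
      (IsInvariantWF θp θm ca cb ξ ↔
        ∃ y : ℝ, sbar ca cb (PiMeas θp θm y) = y ∧ ξ = PiMeas θp θm y)) := by
  refine ⟨WrightFisher.exists_sbar_PiMeas_eq hθp hθm ca cb, fun ξ _ hξ => ⟨?_, ?_⟩⟩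
  · rintro ⟨-, -, hstat⟩
    have hξeq : ξ = PiMeas θp θm (sbar ca cb ξ) :=
      WrightFisher.eq_PiMeas_of_stationary hθp hθm hξ hstat
    exact ⟨sbar ca cb ξ, (congrArg (sbar ca cb) hξeq).symm, hξeq⟩
  · rintro ⟨y, hy, rfl⟩
    refine ⟨WrightFisher.isProbabilityMeasure_PiMeas hθp hθm, WrightFisher.PiMeas_compl_Icc,
      fun φ hφ => ?_⟩
    rw [WrightFisher.gen_eq_genConst, hy]
    exact WrightFisher.integral_genConst_PiMeas hθp hθm hφ

/-- Characterization of invariant distributions: with `θ⁺, θ⁻ > 0` and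
`χ(y) := s̄(Π_y)`, the map `χ` has at least one fixed point, and a probability
measure `ξ` on `[0,1]` is invariant for the Wright–Fisher McKean–Vlasov
equation if and only if `ξ = Π_{y*}` for some fixed point `y*` of `χ`. -/
theorem invariant_distributions (θp θm : ℝ) (hθp : 0 < θp) (hθm : 0 < θm)
    (ca cb cc : ℝ) :
    (∃ y : ℝ, sbar ca cb (PiMeas θp θm y) = y) ∧
    (∀ ξ : Measure ℝ, IsProbabilityMeasure ξ → ξ (Icc (0 : ℝ) 1)ᶜ = 0 →
      (IsInvariantWF θp θm ca cb ξ ↔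
        ∃ y : ℝ, sbar ca cb (PiMeas θp θm y) = y ∧ ξ = PiMeas θp θm y)) :=
  invariant_distributions_general θp θm hθp hθm ca cb
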